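/- arXiv:1710.11382 — 8 statements merged into one kernel-verified Lean document; each statement's English description precedes it below -/
import Mathlib

section
/- Let 0 < a < b be coprime integers with b even, and set α = (a + i·√(b²-a²))/b. Then for every rational q ≥ 0, the number R(q)·α^q is an algebraic integer, where R(q) = ∏ p^⌈n_p·q⌉ over the prime factorization b/2 = ∏ p^{n_p}, and α^q denotes any choice of q-th power (i.e. e^{iqθ} with θ = arccos(a/b)). -/
/-- `radi m u = ∏ p^⌈n_p u⌉` over the prime factorization `m = ∏ p^{n_p}`. -/
noncomputable def radi (m : ℕ) (u : ℚ) : ℕ :=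
  m.factorization.prod fun p e => p ^ (⌈(e : ℚ) * u⌉.toNat)

theorem stmt_3 (a b : ℕ) (ha : 0 < a) (hab : a < b) (hcop : Nat.Coprime a b)
    (hb : 2 ∣ b) (q : ℚ) (hq : 0 ≤ q) :
    IsIntegral ℤ ((radi (b / 2) q : ℂ) *
      Complex.exp ((q : ℂ) * (Real.arccos ((a : ℝ) / b) : ℂ) * Complex.I)) := by
  obtain ⟨m, rfl⟩ := hb
  have hm : 0 < m := by omega
  have hmdiv : 2 * m / 2 = m := by omega
  have hcast : ((2 * m : ℕ) : ℝ) = 2 * (m : ℝ) := by push_cast; ring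
  rw [hmdiv, hcast]
  set θ : ℝ := Real.arccos ((a : ℝ) / (2 * m)) with hθ
  have hb0 : (0:ℝ) < 2 * (m:ℝ) := by positivity
  have hcos : Real.cos θ = (a : ℝ) / (2 * m) := by
    apply Real.cos_arccos
    · have h0 : (0:ℝ) ≤ (a : ℝ) / (2 * m) := by positivity
      linarith
    · rw [div_le_one hb0]; exact_mod_cast hab.le
  set α : ℂ := Complex.exp ((θ:ℂ) * Complex.I) with hα
  have hαform : α = (Real.cos θ : ℂ) + (Real.sin θ : ℂ) * Complex.I := by
    rw [hα, Complex.exp_mul_I, Complex.ofReal_cos, Complex.ofReal_sin]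
  have hpyth : (Real.sin θ : ℂ)^2 + (Real.cos θ : ℂ)^2 = 1 := by
    have := Real.sin_sq_add_cos_sq θ
    exact_mod_cast congrArg (Complex.ofReal) this
  have hcosR : (2 * (m:ℝ)) * Real.cos θ = a := by
    rw [hcos]; field_simp
  have hcosC : (2 * (m:ℂ)) * (Real.cos θ : ℂ) = (a : ℂ) := by
    exact_mod_cast congrArg (Complex.ofReal) hcosR
  -- m * α is an algebraic integer
  have hint : IsIntegral ℤ ((m : ℂ) * α) := by
    refine ⟨Polynomial.X ^ 2 - Polynomial.C (a : ℤ) * Polynomial.X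
      + Polynomial.C ((m : ℤ)^2), ?_, ?_⟩
    · monicity!
    · simp only [Polynomial.eval₂_add, Polynomial.eval₂_sub, Polynomial.eval₂_pow,
        Polynomial.eval₂_mul, Polynomial.eval₂_X, Polynomial.eval₂_C]
      push_cast
      have hkey : α ^ 2 + 1 = 2 * (Real.cos θ : ℂ) * α := by
        rw [hαform]
        linear_combination ((Real.sin θ : ℂ)^2) * Complex.I_sq - hpyth
      linear_combination ((m:ℂ)^2) * hkey + (m:ℂ) * α * hcosC
  -- setup n, d
  set n : ℕ := q.num.toNat with hn
  set d : ℕ := q.den with hd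
  have hd0 : 0 < d := q.pos
  have hnum : (n : ℤ) = q.num := Int.toNat_of_nonneg (Rat.num_nonneg.mpr hq)
  have hnq : (n : ℚ) = q * d := by
    have h1 : ((q.num : ℚ)) = q * q.den := by
      rw [mul_comm]; exact_mod_cast (Rat.den_mul_eq_num q).symm
    rw [show ((n : ℚ)) = ((n : ℤ) : ℚ) by push_cast; ring, hnum, hd]
    exact h1
  -- divisibility
  have hdvd : m ^ n ∣ (radi m q) ^ d := by
    nth_rewrite 1 [← Nat.factorization_prod_pow_eq_self hm.ne']
    rw [radi, Finsupp.prod, Finsupp.prod, ← Finset.prod_pow, ← Finset.prod_pow]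
    apply Finset.prod_dvd_prod_of_dvd
    intro p hp
    rw [← pow_mul, ← pow_mul]
    apply pow_dvd_pow
    set e := m.factorization p
    have h1 : ((e:ℚ) * q) ≤ (⌈(e:ℚ) * q⌉ : ℚ) := Int.le_ceil _
    have h2 : (0:ℤ) ≤ ⌈(e:ℚ) * q⌉ := Int.ceil_nonneg (by positivity)
    have h3 : ((e * n : ℕ) : ℚ) ≤ ((⌈(e:ℚ) * q⌉.toNat * d : ℕ) : ℚ) := by
      push_cast [hnq]
      calc (e:ℚ) * (q * d) = ((e:ℚ) * q) * d := by ring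
        _ ≤ (⌈(e:ℚ) * q⌉ : ℚ) * d := by
            exact mul_le_mul_of_nonneg_right h1 (by positivity)
        _ = ((⌈(e:ℚ) * q⌉.toNat : ℕ) : ℚ) * d := by
            rw [show ((⌈(e:ℚ) * q⌉ : ℚ)) = ((⌈(e:ℚ) * q⌉.toNat : ℕ) : ℚ) from
              by exact_mod_cast (Int.toNat_of_nonneg h2).symm]
    exact_mod_cast h3
  obtain ⟨k, hk⟩ := hdvd
  set z : ℂ := Complex.exp ((q : ℂ) * (θ : ℂ) * Complex.I) with hz
  have hzd : z ^ d = α ^ n := by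
    rw [hz, hα, ← Complex.exp_nat_mul, ← Complex.exp_nat_mul]
    congr 1
    have hq2 : (d : ℚ) * q = (n : ℚ) := by rw [hnq]; ring
    have hq3 : (d : ℂ) * (q : ℂ) = (n : ℂ) := by
      have := congrArg (fun x : ℚ => (x : ℂ)) hq2
      push_cast at this
      exact this
    linear_combination (θ:ℂ) * Complex.I * hq3
  have hwd : ((radi m q : ℂ) * z) ^ d = (k : ℂ) * ((m : ℂ) * α) ^ n := by
    rw [mul_pow, hzd, mul_pow]
    have h5 : ((radi m q : ℕ) : ℂ) ^ d = ((m ^ n * k : ℕ) : ℂ) := by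
      exact_mod_cast congrArg (fun x : ℕ => (x:ℂ)) hk
    push_cast at h5 ⊢
    rw [h5]; ring
  have hkint : IsIntegral ℤ ((k : ℂ)) := by
    have : ((k:ℂ)) = algebraMap ℤ ℂ (k : ℤ) := by push_cast; simp
    rw [this]; exact isIntegral_algebraMap
  have hpow : IsIntegral ℤ (((radi m q : ℂ) * z) ^ d) := by
    rw [hwd]; exact hkint.mul (hint.pow n)
  exact hpow.of_pow hd0
end

section
/- Let 0 < a < b be coprime integers and θ = arccos(a/b) ∈ (0, π/2). Then for every rational q with -1/2 ≤ q ≤ 1/2, both 2√b·cos(qθ) and 2√b·sin(qθ) are algebraic integers. -/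
open Complex Polynomial

lemma intI : IsIntegral ℤ Complex.I := by
  refine ⟨X^2 + C 1, monic_X_pow_add_C _ two_ne_zero, by simp⟩

lemma aux (a b : ℕ) (hab : a < b) (q : ℚ) (hq0 : 0 ≤ q) (hq2 : q ≤ 1/2) :
    IsIntegral ℤ (2 * Real.sqrt b * Real.cos ((q : ℝ) * Real.arccos ((a : ℝ) / b))) ∧
      IsIntegral ℤ (2 * Real.sqrt b * Real.sin ((q : ℝ) * Real.arccos ((a : ℝ) / b))) := by
  have hb0 : (0:ℝ) < b := by exact_mod_cast Nat.zero_lt_of_lt hab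
  have hab' : (a:ℝ) ≤ b := by exact_mod_cast hab.le
  have ha0 : (0:ℝ) ≤ a := Nat.cast_nonneg a
  set θ : ℝ := Real.arccos ((a:ℝ)/b) with hθ
  set s : ℝ := Real.sqrt ((b:ℝ)^2 - (a:ℝ)^2) with hs
  have hs0 : (0:ℝ) ≤ (b:ℝ)^2 - (a:ℝ)^2 := by nlinarith
  have hs2 : s^2 = (b:ℝ)^2 - (a:ℝ)^2 := Real.sq_sqrt hs0
  have hdiv0 : (0:ℝ) ≤ (a:ℝ)/b := by positivity
  have hcos : Real.cos θ = (a:ℝ)/b :=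
    Real.cos_arccos (by linarith) (by rw [div_le_one hb0]; exact hab')
  have hsin : Real.sin θ = s / b := by
    rw [hθ, Real.sin_arccos, show 1 - ((a:ℝ)/b)^2 = ((b:ℝ)^2 - (a:ℝ)^2)/(b:ℝ)^2 by
      field_simp, Real.sqrt_div hs0, Real.sqrt_sq hb0.le, hs]
  -- the complex number w = b e^{iθ}
  set w : ℂ := (a:ℝ) + (s:ℝ) * Complex.I with hw
  have hexpθ : Complex.exp (θ * Complex.I) = ((Real.cos θ : ℝ):ℂ) + ((Real.sin θ : ℝ):ℂ) * Complex.I := by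
    rw [Complex.exp_mul_I]; simp [Complex.ofReal_cos, Complex.ofReal_sin]
  have hwexp : w = (b:ℂ) * Complex.exp (θ * Complex.I) := by
    rw [hexpθ, hcos, hsin, hw]
    have hbne : (b:ℂ) ≠ 0 := by exact_mod_cast hb0.ne'
    push_cast
    field_simp
  have hs2c : ((s:ℝ):ℂ)^2 = (b:ℂ)^2 - (a:ℂ)^2 := by
    rw [← Complex.ofReal_pow, hs2]; push_cast; ring
  have hintw : IsIntegral ℤ w := by
    refine ⟨X^2 - C (2*(a:ℤ)) * X + C ((b:ℤ)^2), ?_, ?_⟩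
    · monicity!
    · simp only [eval₂_add, eval₂_sub, eval₂_mul, eval₂_pow, eval₂_X, eval₂_C]
      push_cast
      rw [hw]
      push_cast
      linear_combination (norm := (push_cast; ring_nf; norm_num)) ((s:ℝ):ℂ)^2 * Complex.I_sq - hs2c
  -- set up m, n
  set n : ℕ := q.den with hn
  set m : ℕ := q.num.toNat with hm
  have hn0 : 0 < n := q.pos
  have hnum0 : 0 ≤ q.num := Rat.num_nonneg.mpr hq0
  have hmnum : (m : ℤ) = q.num := Int.toNat_of_nonneg hnum0
  have hqn : (q:ℝ) * n = m := by
    have hmr : ((m:ℕ):ℝ) = ((q.num:ℤ):ℝ) := by exact_mod_cast hmnum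
    have hdne : ((q.den:ℕ):ℝ) ≠ 0 := by
      exact_mod_cast (Nat.cast_ne_zero (R := ℝ)).mpr q.den_nz
    rw [hn, hmr, Rat.cast_def]
    field_simp
  have h2mn : 2 * m ≤ n := by
    have h1 : (2 * m : ℚ) ≤ (n : ℚ) := by
      have hthis : (m:ℚ) = q * n := by
        have hmr : ((m:ℕ):ℚ) = ((q.num:ℤ):ℚ) := by exact_mod_cast hmnum
        rw [hn, hmr]
        have h := Rat.num_div_den q
        have hden : ((q.den:ℕ):ℚ) ≠ 0 := by exact_mod_cast q.den_nz
        rw [div_eq_iff hden] at h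
        linarith [h]
      rw [hthis]
      have hn' : (0:ℚ) < n := by exact_mod_cast hn0
      nlinarith
    exact_mod_cast h1
  set α : ℂ := (Real.sqrt b : ℝ) * Complex.exp ((q:ℝ) * θ * Complex.I) with hα
  have hαpow : α ^ (2*n) = (b:ℂ) ^ (n - 2*m) * w ^ (2*m) := by
    rw [hα, mul_pow, ← Complex.exp_nat_mul, hwexp, mul_pow, ← Complex.exp_nat_mul]
    have hsb : ((Real.sqrt b : ℝ):ℂ) ^ (2*n) = (b:ℂ)^n := by
      rw [pow_mul, ← Complex.ofReal_pow, Real.sq_sqrt (Nat.cast_nonneg b), Complex.ofReal_natCast]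
    rw [hsb]
    have hbpow : (b:ℂ) ^ (n - 2*m) * (b:ℂ)^(2*m) = (b:ℂ)^n := by
      rw [← pow_add, Nat.sub_add_cancel h2mn]
    have hexpeq : ((2*n : ℕ):ℂ) * ((q:ℝ) * θ * Complex.I) = ((2*m:ℕ):ℂ) * (↑θ * Complex.I) := by
      have : ((2*n : ℕ):ℝ) * ((q:ℝ) * θ) = ((2*m:ℕ):ℝ) * θ := by
        push_cast
        linear_combination 2*θ*hqn
      calc ((2*n : ℕ):ℂ) * ((q:ℝ) * θ * Complex.I) = (((2*n : ℕ):ℝ) * ((q:ℝ) * θ) : ℝ) * Complex.I := by push_cast; ring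
        _ = (((2*m : ℕ):ℝ) * θ : ℝ) * Complex.I := by rw [this]
        _ = ((2*m:ℕ):ℂ) * (↑θ * Complex.I) := by push_cast; ring
    rw [hexpeq, ← hbpow]
    ring
  have hintb : IsIntegral ℤ ((b:ℕ):ℂ) := by
    have : ((b:ℕ):ℂ) = algebraMap ℤ ℂ (b:ℤ) := by push_cast; rfl
    rw [this]; exact isIntegral_algebraMap
  have hintα : IsIntegral ℤ α := by
    refine IsIntegral.of_pow (n := 2*n) (by omega) ?_
    rw [hαpow]
    exact (hintb.pow _).mul (hintw.pow _)
  have hintconj : IsIntegral ℤ ((starRingEnd ℂ) α) :=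
    hintα.map ((starRingEnd ℂ).toIntAlgHom)
  have hαre : α.re = Real.sqrt b * Real.cos ((q:ℝ)*θ) := by
    rw [hα]
    have : ((q:ℝ) * θ : ℂ) = (((q:ℝ)*θ : ℝ) : ℂ) := by push_cast; ring
    rw [this, Complex.re_ofReal_mul, Complex.exp_ofReal_mul_I_re]
  have hαim : α.im = Real.sqrt b * Real.sin ((q:ℝ)*θ) := by
    rw [hα]
    have : ((q:ℝ) * θ : ℂ) = (((q:ℝ)*θ : ℝ) : ℂ) := by push_cast; ring
    rw [this, Complex.im_ofReal_mul, Complex.exp_ofReal_mul_I_im]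
  have hofR := Complex.ofRealHom.toIntAlgHom
  have hinj : Function.Injective (Complex.ofRealHom.toIntAlgHom) := Complex.ofReal_injective
  constructor
  · rw [← isIntegral_algHom_iff (Complex.ofRealHom.toIntAlgHom) hinj]
    have heq : (Complex.ofRealHom.toIntAlgHom) (2 * Real.sqrt b * Real.cos ((q:ℝ)*θ)) = α + (starRingEnd ℂ) α := by
      rw [Complex.add_conj]
      simp only [RingHom.toIntAlgHom_apply, Complex.ofRealHom_eq_coe, hαre]
      push_cast
      ring
    rw [heq]
    exact hintα.add hintconj
  · rw [← isIntegral_algHom_iff (Complex.ofRealHom.toIntAlgHom) hinj]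
    have heq : (Complex.ofRealHom.toIntAlgHom) (2 * Real.sqrt b * Real.sin ((q:ℝ)*θ)) = (α - (starRingEnd ℂ) α) * (-Complex.I) := by
      rw [Complex.sub_conj]
      have hII : (((2*α.im : ℝ)):ℂ) * Complex.I * (-Complex.I) = (((2*α.im : ℝ)):ℂ) := by
        rw [mul_assoc]
        simp
      rw [hII, hαim]
      simp only [RingHom.toIntAlgHom_apply, Complex.ofRealHom_eq_coe]
      push_cast
      ring
    rw [heq]
    exact ((hintα.sub hintconj)).mul (intI.neg)

theorem stmt_4 (a b : ℕ) (ha : 0 < a) (hab : a < b) (hcop : Nat.Coprime a b)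
    (q : ℚ) (hq₁ : -(1/2 : ℚ) ≤ q) (hq₂ : q ≤ 1/2) :
    IsIntegral ℤ (2 * Real.sqrt b * Real.cos ((q : ℝ) * Real.arccos ((a : ℝ) / b))) ∧
      IsIntegral ℤ (2 * Real.sqrt b * Real.sin ((q : ℝ) * Real.arccos ((a : ℝ) / b))) := by
  rcases le_or_gt 0 q with h | h
  · exact aux a b hab q h hq₂
  · have h0 : (0:ℚ) ≤ -q := by linarith
    have h2 : -q ≤ 1/2 := by linarith
    obtain ⟨h1, h2'⟩ := aux a b hab (-q) h0 h2
    rw [Rat.cast_neg, neg_mul, Real.cos_neg] at h1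
    rw [Rat.cast_neg, neg_mul, Real.sin_neg, mul_neg] at h2'
    exact ⟨h1, by simpa using h2'.neg⟩
end

section
/- Let 0 < a < b be coprime integers, θ = arccos(a/b) ∈ (0, π/2), n ≥ 2 an integer, 1 ≤ k ≤ n-1, and λ, μ ∈ ℚ such that (λ+μ)·√(b+a) and (μ-λ)·√(b-a) are algebraic integers. Then 4b·(λ·cos(kθ/n) + μ·cos((n-k)θ/n)) is an algebraic integer. -/
/-!
With `cos θ = a / b`, the numbers `2b e^{±iθ}` are roots of `X² - 4aX + 4b²`, hence algebraic
integers. For `|j| ≤ n` the `2n`-th power of `√(2b) e^{ijθ/(2n)}` is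
`(2b)^{n-|j|} (2b e^{±iθ})^{|j|}`, so `2√(2b) cos (jθ/(2n))` and `2√(2b) sin (jθ/(2n))` are
algebraic integers. With `d = (n - 2k)θ/(2n)` we have `kθ/n = θ/2 - d`, `(n-k)θ/n = θ/2 + d`, and
the half-angle formulas `√(2b) cos (θ/2) = √(b+a)`, `√(2b) sin (θ/2) = √(b-a)` turn the quantity
into `(λ+μ)√(b+a) · 2√(2b) cos d - (μ-λ)√(b-a) · 2√(2b) sin d`.
-/

open Complex Polynomial

lemma isIntegral_natCast_mul_exp_mul_I {c : ℕ} {a : ℤ} {t : ℝ} (h : c * Real.cos t = a) :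
    IsIntegral ℤ ((c : ℂ) * exp (t * I)) := by
  have hcos : (c : ℂ) * cos t = a := by exact_mod_cast congrArg ofReal h
  have hexp : exp (-t * I) * exp (t * I) = 1 := by rw [← exp_add]; simp
  refine ⟨X ^ 2 - C (2 * a) * X + C ((c : ℤ) ^ 2), by monicity!, ?_⟩
  rw [eval₂_add, eval₂_sub, eval₂_mul, eval₂_C, eval₂_C, eval₂_pow, eval₂_X]
  simp only [algebraMap_int_eq, eq_intCast]
  push_cast
  linear_combination 2 * c * exp (t * I) * hcos - c ^ 2 * exp (t * I) * two_cos (x := (t : ℂ))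
    - c ^ 2 * hexp

lemma isIntegral_sqrt_mul_exp_of_le {c N j : ℕ} {t : ℝ} (hN : 0 < N) (hj : j ≤ N)
    (h : IsIntegral ℤ ((c : ℂ) * exp (t * I))) :
    IsIntegral ℤ ((√(c : ℝ) : ℂ) * exp (↑(j * t / (2 * N)) * I)) := by
  refine IsIntegral.of_pow (n := 2 * N) (by omega) ?_
  have hsqrt : (√(c : ℝ) : ℂ) ^ (2 * N) = (c : ℂ) ^ (N - j) * (c : ℂ) ^ j := by
    rw [← pow_add, Nat.sub_add_cancel hj, pow_mul, ← ofReal_pow, Real.sq_sqrt (by positivity)]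
    push_cast; rfl
  have hexp : exp (↑(j * t / (2 * N)) * I) ^ (2 * N) = exp (t * I) ^ j := by
    have : (N : ℂ) ≠ 0 := by exact_mod_cast hN.ne'
    rw [← exp_nat_mul, ← exp_nat_mul]
    push_cast
    field_simp
  rw [mul_pow, hsqrt, hexp, mul_assoc, ← mul_pow]
  exact ((isIntegral_natCast c).pow _).mul (h.pow j)

lemma isIntegral_sqrt_mul_exp_of_abs_le {c N : ℕ} {j : ℤ} {t : ℝ} (hN : 0 < N) (hj : |j| ≤ N)
    (hpos : IsIntegral ℤ ((c : ℂ) * exp (t * I)))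
    (hneg : IsIntegral ℤ ((c : ℂ) * exp (↑(-t) * I))) :
    IsIntegral ℤ ((√(c : ℝ) : ℂ) * exp (↑(j * t / (2 * N)) * I)) := by
  obtain ⟨j, rfl | rfl⟩ := Int.eq_nat_or_neg j
  · rw [Nat.abs_cast, Nat.cast_le] at hj
    exact_mod_cast isIntegral_sqrt_mul_exp_of_le hN hj hpos
  · rw [abs_neg, Nat.abs_cast, Nat.cast_le] at hj
    convert isIntegral_sqrt_mul_exp_of_le hN hj hneg using 4
    push_cast; ring

lemma isIntegral_two_mul_cos_of_isIntegral_mul_exp {r x : ℝ}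
    (hpos : IsIntegral ℤ ((r : ℂ) * exp (x * I)))
    (hneg : IsIntegral ℤ ((r : ℂ) * exp (↑(-x) * I))) :
    IsIntegral ℤ (2 * r * Real.cos x) := by
  have h : ((2 * r * Real.cos x : ℝ) : ℂ) = r * exp (x * I) + r * exp (↑(-x) * I) := by
    push_cast
    linear_combination (r : ℂ) * two_cos (x := (x : ℂ))
  exact (isIntegral_algebraMap_iff ofReal_injective).mp (h.symm ▸ hpos.add hneg :)

lemma isIntegral_two_mul_sin_of_isIntegral_mul_exp {r x : ℝ}
    (hpos : IsIntegral ℤ ((r : ℂ) * exp (x * I)))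
    (hneg : IsIntegral ℤ ((r : ℂ) * exp (↑(-x) * I))) :
    IsIntegral ℤ (2 * r * Real.sin x) := by
  have hI : IsIntegral ℤ I := ⟨X ^ 2 + 1, by monicity!, by simp⟩
  have h : ((2 * r * Real.sin x : ℝ) : ℂ) = I * (r * exp (↑(-x) * I) - r * exp (x * I)) := by
    push_cast
    linear_combination (r : ℂ) * two_sin (x := (x : ℂ))
  exact (isIntegral_algebraMap_iff ofReal_injective).mp (h.symm ▸ hI.mul (hneg.sub hpos) :)

lemma isIntegral_two_mul_sqrt_mul_cos_sin {c N : ℕ} {j : ℤ} {t : ℝ} (hN : 0 < N) (hj : |j| ≤ N)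
    (hpos : IsIntegral ℤ ((c : ℂ) * exp (t * I)))
    (hneg : IsIntegral ℤ ((c : ℂ) * exp (↑(-t) * I))) :
    IsIntegral ℤ (2 * √(c : ℝ) * Real.cos (j * t / (2 * N))) ∧
      IsIntegral ℤ (2 * √(c : ℝ) * Real.sin (j * t / (2 * N))) := by
  have hx := isIntegral_sqrt_mul_exp_of_abs_le hN hj hpos hneg
  have hx' := isIntegral_sqrt_mul_exp_of_abs_le (j := -j) hN (by rwa [abs_neg]) hpos hneg
  rw [Int.cast_neg, neg_mul, neg_div] at hx'
  exact ⟨isIntegral_two_mul_cos_of_isIntegral_mul_exp hx hx',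
    isIntegral_two_mul_sin_of_isIntegral_mul_exp hx hx'⟩

lemma sqrt_two_mul_mul_cos_half_arccos {a b : ℝ} (hb : 0 < b) (ha : -b ≤ a) (hab : a ≤ b) :
    √(2 * b) * Real.cos (Real.arccos (a / b) / 2) = √(b + a) := by
  rw [Real.cos_half (by linarith [Real.arccos_nonneg (a / b), Real.pi_pos]) (Real.arccos_le_pi _),
    Real.cos_arccos (by rwa [le_div_iff₀ hb, neg_one_mul]) (by rwa [div_le_one hb]),
    ← Real.sqrt_mul (by positivity)]
  congr 1
  field_simp

lemma sqrt_two_mul_mul_sin_half_arccos {a b : ℝ} (hb : 0 < b) (ha : -b ≤ a) (hab : a ≤ b) :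
    √(2 * b) * Real.sin (Real.arccos (a / b) / 2) = √(b - a) := by
  rw [Real.sin_half_eq_sqrt (Real.arccos_nonneg _)
      (by linarith [Real.arccos_le_pi (a / b), Real.pi_pos]),
    Real.cos_arccos (by rwa [le_div_iff₀ hb, neg_one_mul]) (by rwa [div_le_one hb]),
    ← Real.sqrt_mul (by positivity)]
  congr 1
  field_simp

theorem stmt_5_general (a b : ℕ) (hab : a < b)
    (n : ℕ) (hn : 2 ≤ n) (k : ℕ) (hk₂ : k ≤ n - 1)
    (l m : ℚ)
    (h₁ : IsIntegral ℤ (((l : ℝ) + (m : ℝ)) * Real.sqrt ((b : ℝ) + a)))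
    (h₂ : IsIntegral ℤ (((m : ℝ) - (l : ℝ)) * Real.sqrt ((b : ℝ) - a))) :
    IsIntegral ℤ (4 * (b : ℝ) *
      ((l : ℝ) * Real.cos ((k : ℝ) * Real.arccos ((a : ℝ) / b) / n) +
        (m : ℝ) * Real.cos (((n : ℝ) - k) * Real.arccos ((a : ℝ) / b) / n))) := by
  set θ := Real.arccos ((a : ℝ) / b)
  have hb : (0 : ℝ) < b := by exact_mod_cast (Nat.zero_le a).trans_lt hab
  have hab' : (a : ℝ) ≤ b := by exact_mod_cast hab.le
  have hcos : ((2 * b : ℕ) : ℝ) * Real.cos θ = (2 * a : ℤ) := by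
    rw [Real.cos_arccos (by linarith [(by positivity : (0 : ℝ) ≤ a / b)]) (by rwa [div_le_one hb])]
    push_cast
    field_simp
  have hcos' : ((2 * b : ℕ) : ℝ) * Real.cos (-θ) = (2 * a : ℤ) := by rwa [Real.cos_neg]
  obtain ⟨hC, hS⟩ := isIntegral_two_mul_sqrt_mul_cos_sin (N := n) (j := n - 2 * k) (by omega)
    (abs_le.mpr ⟨by omega, by omega⟩) (isIntegral_natCast_mul_exp_mul_I hcos)
    (isIntegral_natCast_mul_exp_mul_I hcos')
  set d := (((n : ℤ) - 2 * k : ℤ) : ℝ) * θ / (2 * n) with hd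
  have hn0 : (n : ℝ) ≠ 0 := by positivity
  have hk : (k : ℝ) * θ / n = θ / 2 - d := by rw [hd]; push_cast; field_simp; ring
  have hnk : ((n : ℝ) - k) * θ / n = θ / 2 + d := by rw [hd]; push_cast; field_simp; ring
  have hc : √(2 * (b : ℝ)) * Real.cos (θ / 2) = √(b + a) :=
    sqrt_two_mul_mul_cos_half_arccos hb (by linarith) hab'
  have hs : √(2 * (b : ℝ)) * Real.sin (θ / 2) = √(b - a) :=
    sqrt_two_mul_mul_sin_half_arccos hb (by linarith) hab'
  have hsq : √(2 * (b : ℝ)) ^ 2 = 2 * b := Real.sq_sqrt (by positivity)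
  rw [hk, hnk, Real.cos_sub, Real.cos_add]
  refine (congrArg (IsIntegral ℤ) ?_).mpr ((h₁.mul hC).sub (h₂.mul hS))
  push_cast
  linear_combination
    (l + m : ℝ) * Real.cos d * (2 * √(2 * (b : ℝ)) * hc - 2 * Real.cos (θ / 2) * hsq) +
      (l - m : ℝ) * Real.sin d * (2 * √(2 * (b : ℝ)) * hs - 2 * Real.sin (θ / 2) * hsq)

theorem stmt_5 (a b : ℕ) (ha : 0 < a) (hab : a < b) (hcop : Nat.Coprime a b)
    (n : ℕ) (hn : 2 ≤ n) (k : ℕ) (hk₁ : 1 ≤ k) (hk₂ : k ≤ n - 1)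
    (l m : ℚ)
    (h₁ : IsIntegral ℤ (((l : ℝ) + (m : ℝ)) * Real.sqrt ((b : ℝ) + a)))
    (h₂ : IsIntegral ℤ (((m : ℝ) - (l : ℝ)) * Real.sqrt ((b : ℝ) - a))) :
    IsIntegral ℤ (4 * (b : ℝ) *
      ((l : ℝ) * Real.cos ((k : ℝ) * Real.arccos ((a : ℝ) / b) / n) +
        (m : ℝ) * Real.cos (((n : ℝ) - k) * Real.arccos ((a : ℝ) / b) / n))) :=
  stmt_5_general a b hab n hn k hk₂ l m h₁ h₂
end

section
/- Let β be a totally real algebraic number with T(β) = 0. Then the difference between the largest and the smallest conjugate of β is at least 2√(T(β²)). -/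
/-- `x : ℝ` is a totally real algebraic number: it is algebraic over `ℚ` and all
complex roots of its minimal polynomial are real. -/
def IsTotallyReal (x : ℝ) : Prop :=
  IsAlgebraic ℚ x ∧ ∀ z : ℂ, Polynomial.aeval z (minpoly ℚ x) = 0 → z.im = 0

/-- The normalized trace of a real algebraic number: the sum of the real roots of its
minimal polynomial divided by its degree. -/
noncomputable def normTrace (x : ℝ) : ℝ :=
  ((minpoly ℚ x).aroots ℝ).sum / (minpoly ℚ x).natDegree

/-! The real numbers `rᵢ = σᵢ β`, for `σᵢ` running over the complex embeddings of `ℚ(β)`, are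
roots of the minimal polynomial of `β`, and since the trace of `ℚ(β)/ℚ` is the sum over these
embeddings (and traces multiply along the tower `ℚ ⊆ ℚ(βᵏ) ⊆ ℚ(β)`), `T(βᵏ)` is the mean of the
`rᵢᵏ`. If the `rᵢ` have mean `0` and lie in `[m, M]`, summing `(rᵢ - m)(rᵢ - M) ≤ 0` gives
`T(β²) ≤ -mM ≤ ((M - m) / 2)²`. -/

open Polynomial IntermediateField

theorem Finset.sum_sq_le_card_mul_sq_of_sum_eq_zero {ι : Type*} (s : Finset ι) {f : ι → ℝ}
    {a b : ℝ} (ha : ∀ i ∈ s, a ≤ f i) (hb : ∀ i ∈ s, f i ≤ b) (hf : ∑ i ∈ s, f i = 0) :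
    ∑ i ∈ s, f i ^ 2 ≤ s.card * ((b - a) / 2) ^ 2 :=
  calc ∑ i ∈ s, f i ^ 2 ≤ ∑ i ∈ s, ((a + b) * f i - a * b) :=
        sum_le_sum fun i hi => by nlinarith [ha i hi, hb i hi]
    _ = s.card * -(a * b) := by
        rw [sum_sub_distrib, ← mul_sum, hf, sum_const, nsmul_eq_mul]; ring
    _ ≤ s.card * ((b - a) / 2) ^ 2 :=
        mul_le_mul_of_nonneg_left (by nlinarith [sq_nonneg (a + b)]) (Nat.cast_nonneg _)

theorem Polynomial.splits_of_complex_roots_real {p : ℝ[X]} (hp : p ≠ 0)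
    (h : ∀ z : ℂ, aeval z p = 0 → z.im = 0) : p.Splits := by
  refine Splits.of_splits_map (algebraMap ℝ ℂ) (IsAlgClosed.splits _) fun z hz => ⟨z.re, ?_⟩
  have hz : aeval z p = 0 := by
    rwa [mem_roots (map_ne_zero hp), IsRoot, eval_map_algebraMap] at hz
  exact Complex.ext (by simp) (by simp [h z hz])

theorem IntermediateField.aeval_algHom_gen_minpoly {F E K : Type*} [Field F] [Field E] [Field K]
    [Algebra F E] [Algebra F K] (α : E) (σ : F⟮α⟯ →ₐ[F] K) :
    aeval (σ (AdjoinSimple.gen F α)) (minpoly F α) = 0 := by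
  rw [aeval_algHom_apply, aeval_gen_minpoly, map_zero]

namespace IsTotallyReal

variable {x : ℝ}

theorem splits (h : IsTotallyReal x) : ((minpoly ℚ x).map (algebraMap ℚ ℝ)).Splits :=
  splits_of_complex_roots_real (map_ne_zero (minpoly.ne_zero h.1.isIntegral))
    fun z hz => h.2 z (by rwa [aeval_map_algebraMap] at hz)

theorem im_algHom_gen_eq_zero (h : IsTotallyReal x) (σ : ℚ⟮x⟯ →ₐ[ℚ] ℂ) :
    (σ (AdjoinSimple.gen ℚ x)).im = 0 :=
  h.2 _ (aeval_algHom_gen_minpoly x σ)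

theorem ofReal_re_algHom_gen (h : IsTotallyReal x) (σ : ℚ⟮x⟯ →ₐ[ℚ] ℂ) :
    ((σ (AdjoinSimple.gen ℚ x)).re : ℂ) = σ (AdjoinSimple.gen ℚ x) :=
  Complex.ext rfl (by simp [h.im_algHom_gen_eq_zero σ])

theorem aeval_re_algHom_gen (h : IsTotallyReal x) (σ : ℚ⟮x⟯ →ₐ[ℚ] ℂ) :
    aeval (σ (AdjoinSimple.gen ℚ x)).re (minpoly ℚ x) = 0 := by
  apply Complex.ofReal_injective
  rw [← Complex.coe_algebraMap, ← aeval_algebraMap_apply, Complex.coe_algebraMap,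
    h.ofReal_re_algHom_gen, Complex.ofReal_zero]
  exact aeval_algHom_gen_minpoly x σ

theorem pow (h : IsTotallyReal x) (k : ℕ) : IsTotallyReal (x ^ k) := by
  refine ⟨h.1.pow k, fun z hz => ?_⟩
  obtain ⟨σ, hσ⟩ := exists_algHom_adjoin_of_splits_of_aeval
    (fun s hs => ⟨(Set.mem_singleton_iff.mp hs) ▸ h.1.isIntegral, IsAlgClosed.splits _⟩)
    (pow_mem (mem_adjoin_simple_self ℚ x) k) hz
  have hz : z = σ (AdjoinSimple.gen ℚ x) ^ k := by rw [← hσ, ← map_pow]; rfl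
  -- `σ` carries the instance `IntermediateField.algebra'` rather than `DivisionRing.toRatAlgebra`,
  -- so the lemmas above only apply to it after being restated at its type.
  have him : (σ (AdjoinSimple.gen ℚ x)).im = 0 := h.im_algHom_gen_eq_zero σ
  have hr : ((σ (AdjoinSimple.gen ℚ x)).re : ℂ) = σ (AdjoinSimple.gen ℚ x) :=
    Complex.ext rfl (by simp [him])
  rw [hz, ← hr, ← Complex.ofReal_pow, Complex.ofReal_im]

end IsTotallyReal

theorem normTrace_coe {K : IntermediateField ℚ ℝ} [FiniteDimensional ℚ K] {y : K}
    (hy : IsTotallyReal y) :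
    normTrace y = algebraMap ℚ ℝ (Algebra.trace ℚ K y) / Module.finrank ℚ K := by
  have hmin : minpoly ℚ (y : ℝ) = minpoly ℚ y := minpoly.algHom_eq K.val K.val.injective y
  have hsplit := hy.splits
  rw [hmin] at hsplit
  have hdeg : 0 < (minpoly ℚ y).natDegree := minpoly.natDegree_pos (IsIntegral.of_finite ℚ y)
  have hrank : 0 < Module.finrank ℚ⟮y⟯ K := Module.finrank_pos
  rw [normTrace, hmin, trace_eq_sum_roots hsplit, nsmul_eq_mul,
    ← Module.finrank_mul_finrank ℚ ℚ⟮y⟯ K, adjoin.finrank (IsIntegral.of_finite ℚ y)]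
  push_cast
  field_simp

namespace IsTotallyReal

variable {x : ℝ} [FiniteDimensional ℚ ℚ⟮x⟯]

theorem algebraMap_trace_gen_pow (h : IsTotallyReal x) (k : ℕ) :
    algebraMap ℚ ℝ (Algebra.trace ℚ ℚ⟮x⟯ (AdjoinSimple.gen ℚ x ^ k)) =
      ∑ σ : ℚ⟮x⟯ →ₐ[ℚ] ℂ, (σ (AdjoinSimple.gen ℚ x)).re ^ k := by
  apply Complex.ofReal_injective
  calc ((algebraMap ℚ ℝ (Algebra.trace ℚ ℚ⟮x⟯ (AdjoinSimple.gen ℚ x ^ k)) : ℝ) : ℂ)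
      = algebraMap ℚ ℂ (Algebra.trace ℚ ℚ⟮x⟯ (AdjoinSimple.gen ℚ x ^ k)) := by simp
    _ = ∑ σ : ℚ⟮x⟯ →ₐ[ℚ] ℂ, σ (AdjoinSimple.gen ℚ x ^ k) := trace_eq_sum_embeddings ℂ
    _ = _ := by simp only [map_pow, Complex.ofReal_sum, Complex.ofReal_pow, h.ofReal_re_algHom_gen]

theorem normTrace_pow (h : IsTotallyReal x) (k : ℕ) :
    normTrace (x ^ k) = (∑ σ : ℚ⟮x⟯ →ₐ[ℚ] ℂ, (σ (AdjoinSimple.gen ℚ x)).re ^ k) /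
      Fintype.card (ℚ⟮x⟯ →ₐ[ℚ] ℂ) := by
  have hx : ((AdjoinSimple.gen ℚ x ^ k : ℚ⟮x⟯) : ℝ) = x ^ k := by simp
  rw [← hx, normTrace_coe (hx ▸ h.pow k), h.algebraMap_trace_gen_pow, AlgHom.card]

end IsTotallyReal

theorem stmt_10 (β : ℝ) (h : IsTotallyReal β) (hT : normTrace β = 0) :
    ∃ x y : ℝ, Polynomial.aeval x (minpoly ℚ β) = 0 ∧ Polynomial.aeval y (minpoly ℚ β) = 0 ∧
      2 * Real.sqrt (normTrace (β ^ 2)) ≤ x - y := by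
  have := adjoin.finiteDimensional h.1.isIntegral
  set c : (ℚ⟮β⟯ →ₐ[ℚ] ℂ) → ℝ := fun σ => (σ (AdjoinSimple.gen ℚ β)).re
  have hn : 0 < Fintype.card (ℚ⟮β⟯ →ₐ[ℚ] ℂ) := AlgHom.card ℚ ℚ⟮β⟯ ℂ ▸ Module.finrank_pos
  have : Nonempty (ℚ⟮β⟯ →ₐ[ℚ] ℂ) := Fintype.card_pos_iff.mp hn
  have hsum : ∑ σ, c σ = 0 := by
    have h1 := h.normTrace_pow 1
    simp only [pow_one, hT] at h1
    exact (div_eq_zero_iff.mp h1.symm).resolve_right (by exact_mod_cast hn.ne')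
  obtain ⟨σmax, -, hmax⟩ := Finset.univ.exists_max_image c Finset.univ_nonempty
  obtain ⟨σmin, -, hmin⟩ := Finset.univ.exists_min_image c Finset.univ_nonempty
  refine ⟨c σmax, c σmin, h.aeval_re_algHom_gen σmax, h.aeval_re_algHom_gen σmin, ?_⟩
  have hvar : normTrace (β ^ 2) ≤ ((c σmax - c σmin) / 2) ^ 2 := by
    rw [h.normTrace_pow 2, div_le_iff₀ (by exact_mod_cast hn), mul_comm]
    exact Finset.univ.sum_sq_le_card_mul_sq_of_sum_eq_zero (fun σ _ => hmin σ (Finset.mem_univ _))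
      (fun σ _ => hmax σ (Finset.mem_univ _)) hsum
  have hle : c σmin ≤ c σmax := hmax σmin (Finset.mem_univ _)
  linarith [Real.sqrt_le_iff.mpr ⟨by linarith, hvar⟩]
end

section
/- Let b > 0 be an integer and a ∈ ℤ. Then there exists a nonzero integer u with |u| ≤ √b such that the representative of u·a modulo b in the interval [-b/2, b/2) has absolute value at most √b. -/
/-- The representative of `a` modulo `b` in the interval `[-b/2, b/2)`. -/
noncomputable def rmod (a b : ℝ) : ℝ := a - b * ⌊a / b + 1 / 2⌋

lemma rmod_mem (x b : ℝ) (hb : 0 < b) :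
    -(b/2) ≤ rmod x b ∧ rmod x b < b/2 := by
  have h1 : (⌊x / b + 1 / 2⌋ : ℝ) ≤ x / b + 1 / 2 := Int.floor_le _
  have h2 : x / b + 1 / 2 < ⌊x / b + 1 / 2⌋ + 1 := Int.lt_floor_add_one _
  have hx : x / b * b = x := div_mul_cancel₀ x hb.ne'
  unfold rmod
  constructor
  · nlinarith [mul_lt_mul_of_pos_right h2 hb]
  · nlinarith [mul_le_mul_of_nonneg_right h1 hb.le]

lemma abs_rmod_le (x b : ℝ) (hb : 0 < b) (m : ℤ) :
    |rmod x b| ≤ |x - m * b| := by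
  obtain ⟨h1, h2⟩ := rmod_mem x b hb
  set k : ℤ := ⌊x / b + 1 / 2⌋ with hk
  have hx : x - m * b = rmod x b + ((k : ℝ) - m) * b := by
    unfold rmod; ring
  rcases eq_or_ne m k with rfl | hne
  · simp [hx]
  · have hkm : (1 : ℝ) ≤ |((k : ℝ) - m)| := by
      have : (1:ℤ) ≤ |k - m| := Int.one_le_abs (sub_ne_zero.mpr (Ne.symm hne))
      calc (1:ℝ) ≤ ((|k - m| : ℤ) : ℝ) := by exact_mod_cast this
        _ = |((k:ℝ) - m)| := by push_cast [Int.cast_abs]; ring_nf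
    have hbig : b ≤ |((k : ℝ) - m) * b| := by
      rw [abs_mul, abs_of_pos hb]
      nlinarith
    have habs : |rmod x b| ≤ b / 2 := abs_le.mpr ⟨h1, h2.le⟩
    have htri : |((k : ℝ) - m) * b| - |rmod x b| ≤ |rmod x b + ((k : ℝ) - m) * b| := by
      have := abs_sub_abs_le_abs_sub (((k : ℝ) - m) * b) (-(rmod x b))
      simpa [sub_neg_eq_add, add_comm, abs_neg] using this
    rw [hx]
    linarith

theorem stmt_15 (a : ℤ) (b : ℤ) (hb : 0 < b) :
    ∃ u : ℤ, u ≠ 0 ∧ (|u| : ℝ) ≤ Real.sqrt b ∧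
      |rmod ((u : ℝ) * a) b| ≤ Real.sqrt b := by
  set n : ℕ := Nat.sqrt b.toNat with hn
  have hnpos : 0 < n := Nat.sqrt_pos.mpr (by omega)
  have hbr : (0:ℝ) < (b:ℝ) := by exact_mod_cast hb
  have hbn : ((b:ℝ)) = (b.toNat : ℝ) := by
    exact_mod_cast (Int.toNat_of_nonneg hb.le).symm
  -- n ≤ √b
  have hnsq : ((n:ℝ))^2 ≤ (b:ℝ) := by
    rw [hbn]; exact_mod_cast Nat.sqrt_le' b.toNat
  have hnle : (n : ℝ) ≤ Real.sqrt b := by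
    have := Real.sqrt_le_sqrt hnsq
    rwa [Real.sqrt_sq (by positivity)] at this
  -- √b ≤ n+1
  have hsle : Real.sqrt b ≤ (n : ℝ) + 1 := by
    have hlt : (b:ℝ) ≤ ((n:ℝ)+1)^2 := by
      rw [hbn]; exact_mod_cast (Nat.lt_succ_sqrt' b.toNat).le
    have := Real.sqrt_le_sqrt hlt
    rwa [Real.sqrt_sq (by positivity)] at this
  obtain ⟨j, k, hk0, hkn, hjk⟩ :=
    Real.exists_int_int_abs_mul_sub_le ((a:ℝ)/(b:ℝ)) hnpos
  refine ⟨k, by omega, ?_, ?_⟩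
  · rw [abs_of_pos (show (0:ℝ) < (k:ℝ) by exact_mod_cast hk0)]
    calc ((k:ℝ)) ≤ (n:ℝ) := by exact_mod_cast hkn
      _ ≤ Real.sqrt b := hnle
  · have key : |(k:ℝ) * a - j * b| ≤ (b:ℝ) / ((n:ℝ)+1) := by
      have heq : (k:ℝ) * a - j * b = ((k:ℝ) * ((a:ℝ)/(b:ℝ)) - j) * b := by
        field_simp
      rw [heq, abs_mul, abs_of_pos hbr]
      calc |(k:ℝ) * ((a:ℝ)/(b:ℝ)) - j| * b ≤ (1 / ((n:ℝ)+1)) * b :=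
            mul_le_mul_of_nonneg_right hjk hbr.le
        _ = (b:ℝ) / ((n:ℝ)+1) := by ring
    calc |rmod ((k:ℝ) * a) b| ≤ |(k:ℝ) * a - j * b| := abs_rmod_le _ _ hbr j
      _ ≤ (b:ℝ) / ((n:ℝ)+1) := key
      _ ≤ Real.sqrt b := by
          rw [div_le_iff₀ (by positivity)]
          nlinarith [Real.sq_sqrt hbr.le, Real.sqrt_nonneg (b:ℝ)]
end

section
/- Let λ, μ, θ₁, θ₂, ρ be real numbers and u an integer. If [uρ]_{2π} ≠ u·[ρ]_{2π} and |[uρ]_{2π}| < π/2, then there exists an integer r with |r| ≤ max(1, |u| - 1) such that λ·cos(θ₁ + rρ) + μ·cos(θ₂ - rρ) ≥ 0. -/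
open Real

theorem rmod_eq_toIcoMod {b : ℝ} (hb : 0 < b) (a : ℝ) :
    rmod a b = toIcoMod hb (-(b / 2)) a := by
  have : (a - -(b / 2)) / b = a / b + 1 / 2 := by field_simp; ring
  rw [rmod, toIcoMod, toIcoDiv_eq_floor, this, zsmul_eq_mul, mul_comm]

theorem rmod_mem_Ico {b : ℝ} (hb : 0 < b) (a : ℝ) :
    rmod a b ∈ Set.Ico (-(b / 2)) (b / 2) := by
  simpa only [rmod_eq_toIcoMod hb, neg_add_eq_sub, sub_half] using toIcoMod_mem_Ico hb (-(b / 2)) a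

theorem rmod_add_int_mul {b c : ℝ} (hb : 0 < b) (hc : c ∈ Set.Ico (-(b / 2)) (b / 2))
    (z : ℤ) : rmod (c + z * b) b = c := by
  rw [rmod_eq_toIcoMod hb, toIcoMod_eq_iff, neg_add_eq_sub, sub_half]
  exact ⟨hc, z, by rw [zsmul_eq_mul]⟩

theorem exists_eq_rmod_add_int_mul (a b : ℝ) : ∃ z : ℤ, a = rmod a b + z * b :=
  ⟨⌊a / b + 1 / 2⌋, by rw [rmod]; ring⟩

theorem exists_lt_cos_nat_mul_nonpos {x : ℝ} {n : ℕ} (hx : x ≤ π) (hnx : π ≤ n * x)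
    (hcos : 0 < cos (n * x)) : ∃ r : ℕ, r < n ∧ cos (r * x) ≤ 0 := by
  have hx0 : 0 < x := pos_of_mul_pos_right (pi_pos.trans_le hnx) n.cast_nonneg
  set r := ⌈π / 2 / x⌉₊
  have hlow : π / 2 ≤ r * x := (div_le_iff₀ hx0).1 (Nat.le_ceil _)
  have hup : r * x < π / 2 + x := by
    calc r * x < (π / 2 / x + 1) * x := by
          gcongr; exact Nat.ceil_lt_add_one (div_nonneg pi_div_two_pos.le hx0.le)
      _ = π / 2 + x := by field_simp
  have hr : cos (r * x) ≤ 0 := cos_nonpos_of_pi_div_two_le_of_le hlow (by linarith)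
  have hrn : r ≤ n := Nat.ceil_le.2 ((div_le_iff₀ hx0).2 (by linarith))
  refine ⟨r, lt_of_le_of_ne hrn fun h => ?_, hr⟩
  rw [h] at hr
  linarith

theorem exists_lt_natAbs_cos_nonpos (ρ : ℝ) (u : ℤ)
    (h₁ : rmod (u * ρ) (2 * π) ≠ u * rmod ρ (2 * π))
    (h₂ : |rmod (u * ρ) (2 * π)| < π / 2) :
    ∃ r : ℕ, r < u.natAbs ∧ cos (r * ρ) ≤ 0 := by
  have h2π : 2 * π / 2 = π := by ring
  have hc := rmod_mem_Ico two_pi_pos ρ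
  rw [h2π] at hc
  obtain ⟨z, hρ⟩ := exists_eq_rmod_add_int_mul ρ (2 * π)
  set c := rmod ρ (2 * π)
  have hmul : ∀ k : ℤ, (k : ℝ) * ρ = k * c + (k * z : ℤ) * (2 * π) := fun k => by
    rw [hρ]; push_cast; ring
  have hcos_nat : ∀ k : ℕ, cos (k * |c|) = cos (k * ρ) := fun k => by
    have hk : (k : ℝ) * |c| = |(k : ℤ) * c| := by rw [abs_mul, Int.cast_natCast, Nat.abs_cast]
    rw [hk, cos_abs, ← cos_add_int_mul_two_pi _ (k * z), ← hmul, Int.cast_natCast]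
  have hnc : (u.natAbs : ℝ) * |c| = |u * c| := by rw [abs_mul, Nat.cast_natAbs, Int.cast_abs]
  have hπ_le : π ≤ u.natAbs * |c| := by
    rw [hnc]
    by_contra! h
    obtain ⟨hl, hr⟩ := abs_lt.1 h
    refine h₁ ?_
    rw [hmul u]
    exact rmod_add_int_mul two_pi_pos (by rw [h2π]; exact ⟨hl.le, hr⟩) _
  have hcos_pos : 0 < cos (u.natAbs * |c|) := by
    obtain ⟨w, hw⟩ := exists_eq_rmod_add_int_mul (u * ρ) (2 * π)
    rw [hnc, cos_abs, ← cos_add_int_mul_two_pi _ (u * z), ← hmul, hw, cos_add_int_mul_two_pi]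
    exact cos_pos_of_mem_Ioo (abs_lt.1 h₂)
  obtain ⟨r, hr, hcos⟩ :=
    exists_lt_cos_nat_mul_nonpos (abs_le.2 ⟨hc.1, hc.2.le⟩) hπ_le hcos_pos
  exact ⟨r, hr, by rwa [← hcos_nat]⟩

theorem mul_cos_add_add_mul_cos_sub_add_neg (l m θ₁ θ₂ t : ℝ) :
    (l * cos (θ₁ + t) + m * cos (θ₂ - t)) + (l * cos (θ₁ + -t) + m * cos (θ₂ - -t)) =
      2 * cos t * (l * cos θ₁ + m * cos θ₂) := by
  simp only [cos_add, cos_sub, cos_neg, sin_neg]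
  ring

theorem exists_abs_le_mul_cos_add_add_mul_cos_sub_nonneg (l m θ₁ θ₂ ρ : ℝ) {s : ℤ}
    (hs : cos (s * ρ) ≤ 0) :
    ∃ r : ℤ, |r| ≤ |s| ∧ 0 ≤ l * cos (θ₁ + r * ρ) + m * cos (θ₂ - r * ρ) := by
  by_cases h₀ : 0 ≤ l * cos θ₁ + m * cos θ₂
  · exact ⟨0, by simp, by simpa using h₀⟩
  have hsum := mul_cos_add_add_mul_cos_sub_add_neg l m θ₁ θ₂ (s * ρ)
  have hprod : 0 ≤ 2 * cos (s * ρ) * (l * cos θ₁ + m * cos θ₂) :=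
    mul_nonneg_of_nonpos_of_nonpos (by linarith) (by linarith)
  by_cases hs₀ : 0 ≤ l * cos (θ₁ + s * ρ) + m * cos (θ₂ - s * ρ)
  · exact ⟨s, le_rfl, hs₀⟩
  · refine ⟨-s, (abs_neg s).le, ?_⟩
    rw [Int.cast_neg, neg_mul]
    linarith

theorem stmt_17 (l m θ₁ θ₂ ρ : ℝ) (u : ℤ)
    (h₁ : rmod ((u : ℝ) * ρ) (2 * Real.pi) ≠ (u : ℝ) * rmod ρ (2 * Real.pi))
    (h₂ : |rmod ((u : ℝ) * ρ) (2 * Real.pi)| < Real.pi / 2) :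
    ∃ r : ℤ, (|r| : ℝ) ≤ max 1 (|u| - 1) ∧
      0 ≤ l * Real.cos (θ₁ + (r : ℝ) * ρ) + m * Real.cos (θ₂ - (r : ℝ) * ρ) := by
  obtain ⟨s, hsu, hs⟩ := exists_lt_natAbs_cos_nonpos ρ u h₁ h₂
  obtain ⟨r, hrs, hr⟩ := exists_abs_le_mul_cos_add_add_mul_cos_sub_nonneg l m θ₁ θ₂ ρ
    (s := s) (by exact_mod_cast hs)
  refine ⟨r, ?_, hr⟩
  have hru : |r| ≤ max 1 (|u| - 1) := le_max_of_le_right <| by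
    rw [Nat.abs_cast] at hrs
    rw [Int.abs_eq_natAbs u]
    omega
  exact_mod_cast hru
end

section
/- Let t be an odd positive integer. Then there are infinitely many primes p such that p ≡ 2 (mod t), p ≡ 3 (mod 4), and 2t is a quadratic residue modulo p. -/
/-!
Choose a residue class `a` modulo `8t` with `a ≡ 2 (mod t)` and `a ≡ 3` or `7 (mod 8)`, the
choice mod 8 depending on `t mod 8`; Dirichlet's theorem gives infinitely many primes `p ≡ a`.
For such `p`, quadratic reciprocity (with `p ≡ 3 mod 4`) and `p ≡ 2 (mod t)` give
`(t/p) = χ₄(t) (p/t) = χ₄(t) (2/t) = χ₈'(t)`, so `(2t/p) = χ₈(p) χ₈'(t)`, and the choice of `a mod 8`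
makes this `1`.
-/

open ZMod

theorem Nat.exists_coprime_mul_modEq_modEq {m n r s : ℕ} (hmn : m.Coprime n)
    (hr : r.Coprime m) (hs : s.Coprime n) :
    ∃ a : ℕ, a.Coprime (m * n) ∧ a ≡ r [MOD m] ∧ a ≡ s [MOD n] := by
  obtain ⟨a, har, has⟩ := Nat.chineseRemainder hmn r s
  refine ⟨a, Nat.Coprime.mul_right ?_ ?_, har, has⟩
  · rwa [Nat.Coprime, har.gcd_eq]
  · rwa [Nat.Coprime, has.gcd_eq]

theorem Int.exists_sq_modEq_of_legendreSym_eq_one {p : ℕ} [Fact p.Prime] {a : ℤ}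
    (h : legendreSym p a = 1) : ∃ x : ℤ, x ^ 2 ≡ a [ZMOD p] := by
  have hsq : IsSquare (a : ZMod p) := by
    by_cases ha : (a : ZMod p) = 0
    · rw [ha]
      exact IsSquare.zero
    · exact (legendreSym.eq_one_iff p ha).mp h
  obtain ⟨y, hy⟩ := hsq
  refine ⟨(y.cast : ℤ), ?_⟩
  rw [← ZMod.intCast_eq_intCast_iff, hy]
  push_cast
  rw [sq]

theorem jacobiSym.eq_χ₄_mul_of_mod_four_eq_three {a b : ℕ} (ha : Odd a) (hb : b % 4 = 3) :
    jacobiSym a b = χ₄ a * jacobiSym b a := by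
  rcases Nat.odd_mod_four_iff.mp (Nat.odd_iff.mp ha) with ha4 | ha4
  · rw [jacobiSym.quadratic_reciprocity_one_mod_four ha4 (Nat.odd_iff.mpr (Nat.odd_of_mod_four_eq_three hb)),
      χ₄_nat_one_mod_four ha4, one_mul]
  · rw [jacobiSym.quadratic_reciprocity_three_mod_four ha4 hb, χ₄_nat_three_mod_four ha4,
      neg_one_mul]

theorem legendreSym_two_mul_eq_χ₈_mul_χ₈' {p t : ℕ} [Fact p.Prime] (hp : p % 4 = 3)
    (ht : Odd t) (hpt : (p : ℤ) ≡ 2 [ZMOD t]) :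
    legendreSym p (2 * t) = χ₈ p * χ₈' t := by
  have hp_odd : Odd p := Nat.odd_iff.mpr (Nat.odd_of_mod_four_eq_three hp)
  have hJ : jacobiSym p t = χ₈ t := by
    rw [jacobiSym.mod_left' hpt, jacobiSym.at_two ht]
  rw [jacobiSym.legendreSym.to_jacobiSym, jacobiSym.mul_left, jacobiSym.at_two hp_odd,
    jacobiSym.eq_χ₄_mul_of_mod_four_eq_three ht hp, hJ]
  exact_mod_cast congrArg (χ₈ p * ·) (χ₈'_int_eq_χ₄_mul_χ₈ t).symm

theorem exists_mod_four_eq_three_χ₈_mul_χ₈'_eq_one {t : ℕ} (ht : Odd t) :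
    ∃ r : ℕ, r % 4 = 3 ∧ χ₈ r * χ₈' t = 1 := by
  rw [χ₈'_nat_eq_if_mod_eight, if_neg (by simpa using Nat.odd_iff.mp ht)]
  split_ifs
  · exact ⟨7, rfl, by decide⟩
  · exact ⟨3, rfl, by decide⟩

theorem stmt_18_general (t : ℕ) (hodd : Odd t) :
    {p : ℕ | p.Prime ∧ (p : ℤ) ≡ 2 [ZMOD (t : ℤ)] ∧ p % 4 = 3 ∧
      ∃ x : ℤ, x ^ 2 ≡ 2 * (t : ℤ) [ZMOD (p : ℤ)]}.Infinite := by
  obtain ⟨r, hr4, hχ⟩ := exists_mod_four_eq_three_χ₈_mul_χ₈'_eq_one hodd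
  have hr_odd : Odd r := Nat.odd_iff.mpr (Nat.odd_of_mod_four_eq_three hr4)
  obtain ⟨a, hcop, ha8, hat⟩ := Nat.exists_coprime_mul_modEq_modEq
    ((Nat.coprime_two_left.mpr hodd).pow_left 3) (hr_odd.coprime_two_right.pow_right 3)
    (Nat.coprime_two_left.mpr hodd)
  refine (Nat.infinite_setOfPred_prime_and_modEq (by simp [hodd.pos.ne']) hcop).mono ?_
  rintro p ⟨hp, hpa⟩
  have := Fact.mk hp
  have hp8 : p ≡ r [MOD 8] := (hpa.of_mul_right t).trans ha8
  have hpt : (p : ℤ) ≡ 2 [ZMOD t] := Int.natCast_modEq_iff.mpr ((hpa.of_mul_left 8).trans hat)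
  have hp4 : p % 4 = 3 := Eq.trans (hp8.of_dvd (by norm_num : 4 ∣ 8)) hr4
  refine ⟨hp, hpt, hp4, Int.exists_sq_modEq_of_legendreSym_eq_one ?_⟩
  rw [legendreSym_two_mul_eq_χ₈_mul_χ₈' hp4 hodd hpt,
    (ZMod.natCast_eq_natCast_iff p r 8).mpr hp8, hχ]

theorem stmt_18 (t : ℕ) (ht : 0 < t) (hodd : Odd t) :
    {p : ℕ | p.Prime ∧ (p : ℤ) ≡ 2 [ZMOD (t : ℤ)] ∧ p % 4 = 3 ∧
      ∃ x : ℤ, x ^ 2 ≡ 2 * (t : ℤ) [ZMOD (p : ℤ)]}.Infinite :=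
  stmt_18_general t hodd
end

section
/- Let λ, μ be real numbers, ε > 0, θ ∈ ℝ, and set A = max(1, ⌈2π(|λ|+|μ|)/ε⌉) and s = λ² + μ² + 2λμ·cos(θ). Then for every integer n ≥ A and every integer k with 1 ≤ k ≤ n-1 and gcd(k,n) = 1, there exists t ∈ ℤ such that λ·cos(k(θ + 2πt)/n) + μ·cos((n-k)(θ + 2πt)/n) ≥ √s − ε. -/
/-!
With `a = l + m cos θ` and `b = m sin θ`, the function `y ↦ l cos y + m cos (θ - y)` equals
`a cos y + b sin y`, whose maximum is `√(a² + b²) = √s`, attained at `y₀ = arg (a + b i)`; it is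
`(|l| + |m|)`-Lipschitz. Modulo `2π` the first angle is `y = k (θ + 2π t) / n` and the second is
`θ - y`. As `k` is invertible modulo `n`, these `y` run through the whole grid `k θ / n + (2π / n) ℤ`,
so one of them lies within `π / n` of `y₀`, and the loss `(|l| + |m|) π / n` is at most `ε` by the
choice of `A`.
-/

open Real

lemma exists_mul_cos_add_mul_sin_eq_sqrt (a b : ℝ) :
    ∃ y, a * cos y + b * sin y = √(a ^ 2 + b ^ 2) := by
  set c : ℂ := ⟨a, b⟩
  have hre : ‖c‖ * cos c.arg = a := Complex.norm_mul_cos_arg c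
  have him : ‖c‖ * sin c.arg = b := Complex.norm_mul_sin_arg c
  have hnorm : ‖c‖ = √(a ^ 2 + b ^ 2) := by
    rw [Complex.norm_def, Complex.normSq_apply]
    show √(a * a + b * b) = _
    ring_nf
  refine ⟨c.arg, ?_⟩
  rw [← hnorm, ← hre, ← him]
  linear_combination ‖c‖ * sin_sq_add_cos_sq c.arg

lemma exists_mul_cos_add_mul_cos_sub_eq_sqrt (l m θ : ℝ) :
    ∃ y, l * cos y + m * cos (θ - y) = √(l ^ 2 + m ^ 2 + 2 * l * m * cos θ) := by
  obtain ⟨y, hy⟩ := exists_mul_cos_add_mul_sin_eq_sqrt (l + m * cos θ) (m * sin θ)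
  have hsq : (l + m * cos θ) ^ 2 + (m * sin θ) ^ 2 = l ^ 2 + m ^ 2 + 2 * l * m * cos θ := by
    linear_combination m ^ 2 * sin_sq_add_cos_sq θ
  refine ⟨y, ?_⟩
  rw [cos_sub, ← hsq, ← hy]
  ring

lemma abs_mul_cos_add_mul_cos_sub_sub_le (l m θ x y : ℝ) :
    |(l * cos x + m * cos (θ - x)) - (l * cos y + m * cos (θ - y))| ≤ (|l| + |m|) * |x - y| := by
  have h₁ := abs_cos_sub_cos_le x y
  have h₂ : |cos (θ - x) - cos (θ - y)| ≤ |x - y| := by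
    simpa [abs_sub_comm x y] using abs_cos_sub_cos_le (θ - x) (θ - y)
  calc _ = |l * (cos x - cos y) + m * (cos (θ - x) - cos (θ - y))| := by ring_nf
    _ ≤ |l| * |cos x - cos y| + |m| * |cos (θ - x) - cos (θ - y)| := by
        simpa only [abs_mul] using abs_add_le (l * (cos x - cos y)) (m * (cos (θ - x) - cos (θ - y)))
    _ ≤ |l| * |x - y| + |m| * |x - y| := by gcongr
    _ = (|l| + |m|) * |x - y| := by ring

lemma exists_int_abs_add_int_mul_sub_le {h : ℝ} (hh : 0 < h) (c y : ℝ) :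
    ∃ j : ℤ, |c + j * h - y| ≤ h / 2 := by
  set x := (y - c) / h
  have hround := abs_sub_round x
  have hx : c + round x * h - y = -((x - round x) * h) := by
    simp only [x]
    field_simp
    ring
  refine ⟨round x, ?_⟩
  rw [hx, abs_neg, abs_mul, abs_of_pos hh]
  linarith [mul_le_mul_of_nonneg_right hround hh.le]

lemma exists_int_abs_mul_div_sub_int_mul_two_pi_sub_le {k n : ℤ} (hn : 0 < n)
    (hkn : IsCoprime k n) (θ y : ℝ) :
    ∃ t w : ℤ, |k * (θ + 2 * π * t) / n - w * (2 * π) - y| ≤ π / n := by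
  have hnR : (0 : ℝ) < n := by exact_mod_cast hn
  obtain ⟨j, hj⟩ := exists_int_abs_add_int_mul_sub_le (by positivity : 0 < 2 * π / n) (k * θ / n) y
  obtain ⟨u, v, huv⟩ := hkn
  have hkt : k * (u * j) = j + n * (-(v * j)) := by linear_combination j * huv
  have hktR : (k : ℝ) * ((u * j : ℤ) : ℝ) = j + n * ((-(v * j) : ℤ) : ℝ) := by exact_mod_cast hkt
  refine ⟨u * j, -(v * j), ?_⟩
  have hangle : k * (θ + 2 * π * ((u * j : ℤ) : ℝ)) / n - ((-(v * j) : ℤ) : ℝ) * (2 * π)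
      = k * θ / n + j * (2 * π / n) := by
    field_simp
    linear_combination 2 * π * hktR
  rw [hangle]
  convert hj using 1
  ring

theorem stmt_19_general (l m : ℝ) (ε : ℝ) (hε : 0 < ε) (θ : ℝ)
    (A : ℤ) (hA : A = max 1 ⌈2 * Real.pi * (|l| + |m|) / ε⌉)
    (s : ℝ) (hs : s = l ^ 2 + m ^ 2 + 2 * l * m * Real.cos θ)
    (n : ℤ) (hn : A ≤ n) (k : ℤ)
    (hgcd : Int.gcd k n = 1) :
    ∃ t : ℤ, Real.sqrt s - ε ≤
      l * Real.cos ((k : ℝ) * (θ + 2 * Real.pi * t) / n) +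
        m * Real.cos (((n : ℝ) - k) * (θ + 2 * Real.pi * t) / n) := by
  rw [hA, max_le_iff] at hn
  have hnR : (0 : ℝ) < n := by exact_mod_cast hn.1
  have hloss : (|l| + |m|) * (π / n) ≤ ε := by
    have h := (Int.le_ceil _).trans (show (⌈2 * π * (|l| + |m|) / ε⌉ : ℝ) ≤ n by exact_mod_cast hn.2)
    rw [div_le_iff₀ hε] at h
    rw [mul_div_assoc', div_le_iff₀ hnR]
    nlinarith [pi_pos, abs_nonneg l, abs_nonneg m]
  obtain ⟨y₀, hy₀⟩ := exists_mul_cos_add_mul_cos_sub_eq_sqrt l m θ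
  obtain ⟨t, w, hclose⟩ := exists_int_abs_mul_div_sub_int_mul_two_pi_sub_le (by omega)
    (Int.isCoprime_iff_gcd_eq_one.mpr hgcd) θ y₀
  set y := k * (θ + 2 * π * t) / n - w * (2 * π)
  have hcos₁ : cos (k * (θ + 2 * π * t) / n) = cos y := (cos_sub_int_mul_two_pi _ w).symm
  have hcos₂ : cos ((n - k) * (θ + 2 * π * t) / n) = cos (θ - y) := by
    rw [← cos_add_int_mul_two_pi (θ - y) (t - w)]
    congr 1
    push_cast
    simp only [y]
    field_simp
    ring
  refine ⟨t, ?_⟩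
  rw [hcos₁, hcos₂, hs, ← hy₀]
  have hlip := abs_mul_cos_add_mul_cos_sub_sub_le l m θ y y₀
  have := mul_le_mul_of_nonneg_left hclose (by positivity : 0 ≤ |l| + |m|)
  linarith [neg_abs_le (l * cos y + m * cos (θ - y) - (l * cos y₀ + m * cos (θ - y₀)))]

theorem stmt_19 (l m : ℝ) (ε : ℝ) (hε : 0 < ε) (θ : ℝ)
    (A : ℤ) (hA : A = max 1 ⌈2 * Real.pi * (|l| + |m|) / ε⌉)
    (s : ℝ) (hs : s = l ^ 2 + m ^ 2 + 2 * l * m * Real.cos θ)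
    (n : ℤ) (hn : A ≤ n) (k : ℤ) (hk : 1 ≤ k) (hk' : k ≤ n - 1)
    (hgcd : Int.gcd k n = 1) :
    ∃ t : ℤ, Real.sqrt s - ε ≤
      l * Real.cos ((k : ℝ) * (θ + 2 * Real.pi * t) / n) +
        m * Real.cos (((n : ℝ) - k) * (θ + 2 * Real.pi * t) / n) :=
  stmt_19_general l m ε hε θ A hA s hs n hn k hgcd
end
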